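/- Let P be a feedback family and Q a forward family, with ν_{0,n} the Y_{0,n}-marginal of the joint measure ←P⊗→Q. Then for every Borel probability measure λ on Y_{0,n}, the identity D(←P⊗→Q ‖ ←P⊗λ) = I(←P, →Q) + D(ν_{0,n} ‖ λ) holds in the extended reals [0, +∞]. -/

import Mathlib

open MeasureTheory ProbabilityTheory Filter
open scoped ENNReal NNReal

namespace PaperDI

lemma measurable_finSnoc {Z : ℕ → Type*} [∀ i, MeasurableSpace (Z i)] (k : ℕ) :
    Measurable (fun p : (∀ j : Fin k, Z j) × Z k =>
      (Fin.snoc p.1 p.2 : ∀ j : Fin (k + 1), Z j)) := by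
  apply measurable_pi_lambda
  intro j
  induction j using Fin.lastCases with
  | last => simpa using measurable_snd
  | cast i =>
    simp only [Fin.snoc_castSucc]
    exact (measurable_pi_apply i).comp measurable_fst

/-- Restriction of a prefix of length `k+1` to the prefix of length `k`. -/
def restr {Z : ℕ → Type*} (k : ℕ) (z : ∀ j : Fin (k + 1), Z j) : ∀ j : Fin k, Z j :=
  fun j => z j.castSucc

lemma measurable_restr {Z : ℕ → Type*} [∀ i, MeasurableSpace (Z i)] (k : ℕ) :
    Measurable (restr (Z := Z) k) :=
  measurable_pi_lambda _ fun _ => measurable_pi_apply _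

variable (X Y : ℕ → Type*) [∀ i, MeasurableSpace (X i)] [∀ i, MeasurableSpace (Y i)]

/-- A feedback family `(p_0, …, p_n)`: `p_0` is a probability measure on `X_0` (a Markov
kernel from the one-point space of empty prefixes) and `p_i` is a Markov kernel from
`X_{0,i-1} × Y_{0,i-1}` to `X_i`. -/
structure FeedbackFamily (n : ℕ) where
  p : ∀ i : Fin (n + 1), Kernel ((∀ j : Fin (i : ℕ), X j) × (∀ j : Fin (i : ℕ), Y j)) (X i)
  markov : ∀ i, IsMarkovKernel (p i)

/-- A forward family `(q_0, …, q_n)`: `q_i` is a Markov kernel from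
`Y_{0,i-1} × X_{0,i}` to `Y_i`. -/
structure ForwardFamily (n : ℕ) where
  q : ∀ i : Fin (n + 1), Kernel ((∀ j : Fin (i : ℕ), Y j) × (∀ j : Fin ((i : ℕ) + 1), X j)) (Y i)
  markov : ∀ i, IsMarkovKernel (q i)

variable {X Y} {n : ℕ}

/-- The causally conditioned kernel `←P_{0,k}` from `Y_{0,k-1}` to `X_{0,k}`. -/
noncomputable def back (P : FeedbackFamily X Y n) :
    (k : ℕ) → k ≤ n → Kernel (∀ j : Fin k, Y j) (∀ j : Fin (k + 1), X j)
  | 0, _ =>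
      Kernel.map ((P.p ⟨0, Nat.succ_pos n⟩).comap (fun _ => default) measurable_const)
        (fun x0 => (Fin.snoc default x0 : ∀ j : Fin 1, X j))
  | (k + 1), h =>
      Kernel.map
        (((back P k (by omega)).comap (restr k) (measurable_restr k)) ⊗ₖ
          ((P.p ⟨k + 1, by omega⟩).comap
            (fun t : (∀ j : Fin (k + 1), Y j) × (∀ j : Fin (k + 1), X j) => (t.2, t.1))
            (measurable_snd.prodMk measurable_fst)))
        (fun t : (∀ j : Fin (k + 1), X j) × X (k + 1) =>
          (Fin.snoc t.1 t.2 : ∀ j : Fin (k + 2), X j))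

/-- The causally conditioned kernel `→Q_{0,k}` from `X_{0,k}` to `Y_{0,k}`. -/
noncomputable def fwd (Q : ForwardFamily X Y n) :
    (k : ℕ) → k ≤ n → Kernel (∀ j : Fin (k + 1), X j) (∀ j : Fin (k + 1), Y j)
  | 0, _ =>
      Kernel.map ((Q.q ⟨0, Nat.succ_pos n⟩).comap (fun x => (default, x))
          (measurable_const.prodMk measurable_id))
        (fun y0 => (Fin.snoc default y0 : ∀ j : Fin 1, Y j))
  | (k + 1), h =>
      Kernel.map
        (((fwd Q k (by omega)).comap (restr (k + 1)) (measurable_restr (k + 1))) ⊗ₖ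
          ((Q.q ⟨k + 1, by omega⟩).comap
            (fun t : (∀ j : Fin (k + 2), X j) × (∀ j : Fin (k + 1), Y j) => (t.2, t.1))
            (measurable_snd.prodMk measurable_fst)))
        (fun t : (∀ j : Fin (k + 1), Y j) × Y (k + 1) =>
          (Fin.snoc t.1 t.2 : ∀ j : Fin (k + 2), Y j))

/-- The interleaved joint measure of `←P ⊗ →Q` on prefixes of length `k`. -/
noncomputable def jointAux (P : FeedbackFamily X Y n) (Q : ForwardFamily X Y n) :
    (k : ℕ) → k ≤ n + 1 → Measure ((∀ j : Fin k, X j) × (∀ j : Fin k, Y j))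
  | 0, _ => Measure.dirac default
  | (k + 1), h =>
      let μ1 := (jointAux P Q k (by omega)) ⊗ₘ (P.p ⟨k, by omega⟩)
      let μ2 := μ1.map
          (fun t : ((∀ j : Fin k, X j) × (∀ j : Fin k, Y j)) × X k =>
            (t.1.2, (Fin.snoc t.1.1 t.2 : ∀ j : Fin (k + 1), X j)))
      let μ3 := μ2 ⊗ₘ (Q.q ⟨k, by omega⟩)
      μ3.map
          (fun t : ((∀ j : Fin k, Y j) × (∀ j : Fin (k + 1), X j)) × Y k =>
            (t.1.2, (Fin.snoc t.1.1 t.2 : ∀ j : Fin (k + 1), Y j)))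

/-- The joint measure `←P ⊗ →Q` on `X_{0,n} × Y_{0,n}`. -/
noncomputable def joint (P : FeedbackFamily X Y n) (Q : ForwardFamily X Y n) :
    Measure ((∀ j : Fin (n + 1), X j) × (∀ j : Fin (n + 1), Y j)) :=
  jointAux P Q (n + 1) le_rfl

/-- The marginal `ν_{0,n}` of `←P ⊗ →Q` on `Y_{0,n}`. -/
noncomputable def nu (P : FeedbackFamily X Y n) (Q : ForwardFamily X Y n) :
    Measure (∀ j : Fin (n + 1), Y j) :=
  (joint P Q).map Prod.snd

/-- The measure `←P ⊗ λ` on `X_{0,n} × Y_{0,n}`, i.e. the measure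
`←P_{0,n}(dx^n | y^{n-1}) ⊗ λ(dy^n)`. -/
noncomputable def backProd (P : FeedbackFamily X Y n) (lam : Measure (∀ j : Fin (n + 1), Y j)) :
    Measure ((∀ j : Fin (n + 1), X j) × (∀ j : Fin (n + 1), Y j)) :=
  (lam ⊗ₘ ((back P n le_rfl).comap (restr n) (measurable_restr n))).map Prod.swap

open Classical in
/-- Kullback-Leibler divergence (relative entropy) `D(μ ‖ ν)`, with the convention
`D(μ ‖ ν) = ∞` when absolute continuity fails. -/
noncomputable def KL {Z : Type*} [MeasurableSpace Z] (μ ν : Measure Z) : ℝ≥0∞ :=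
  if μ ≪ ν ∧ Integrable (llr μ ν) μ then ENNReal.ofReal (∫ z, llr μ ν z ∂μ) else ⊤

/-- Directed information `I(←P, →Q) = D(←P ⊗ →Q ‖ ←P ⊗ ν_{0,n})`. -/
noncomputable def DI (P : FeedbackFamily X Y n) (Q : ForwardFamily X Y n) : ℝ≥0∞ :=
  KL (joint P Q) (backProd P (nu P Q))

/-- Weak convergence of a sequence of measures: integrals of every bounded continuous
real-valued function converge. -/
def WeakTendsto {Z : Type*} [MeasurableSpace Z] [TopologicalSpace Z]
    (μ : ℕ → Measure Z) (μ0 : Measure Z) : Prop :=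
  ∀ f : BoundedContinuousFunction Z ℝ,
    Tendsto (fun α => ∫ z, f z ∂(μ α)) atTop (nhds (∫ z, f z ∂μ0))

/-- Uniform tightness of a family of measures. -/
def UniformlyTight {Z : Type*} [MeasurableSpace Z] [TopologicalSpace Z]
    (M : Set (Measure Z)) : Prop :=
  ∀ ε : ℝ≥0∞, 0 < ε → ∃ K : Set Z, IsCompact K ∧ ∀ μ ∈ M, 1 - ε ≤ μ K

/-- The marginal `π_i` of `←P ⊗ →Q` on `X_{0,i} × Y_{0,i-1}`. -/
noncomputable def margin (P : FeedbackFamily X Y n) (Q : ForwardFamily X Y n) (i : Fin (n + 1)) :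
    Measure ((∀ j : Fin ((i : ℕ) + 1), X j) × (∀ j : Fin (i : ℕ), Y j)) :=
  (joint P Q).map (fun t =>
    ((fun j : Fin ((i : ℕ) + 1) => t.1 (Fin.castLE i.isLt j)),
     (fun j : Fin (i : ℕ) => t.2 (Fin.castLE i.isLt.le j))))

/-- The iterated product measure of a tuple of kernels `(λ_0, …, λ_n)`,
`λ_i : Y_{0,i-1} → Y_i`, on prefixes of length `k`. -/
noncomputable def chain {Z : ℕ → Type*} [∀ i, MeasurableSpace (Z i)] {n : ℕ}
    (lam : ∀ i : Fin (n + 1), Kernel (∀ j : Fin (i : ℕ), Z j) (Z i)) :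
    (k : ℕ) → k ≤ n + 1 → Measure (∀ j : Fin k, Z j)
  | 0, _ => Measure.dirac default
  | (k + 1), h =>
      ((chain lam k (by omega)) ⊗ₘ (lam ⟨k, by omega⟩)).map
        (fun t : (∀ j : Fin k, Z j) × Z k => (Fin.snoc t.1 t.2 : ∀ j : Fin (k + 1), Z j))

/-- The joint measure `←S ⊗ →R` on `X_{0,n} × Y_{0,n}` determined by a reversed pair
`(S, R)`; a reversed pair is formally a feedback family and a forward family with the
roles of `X` and `Y` interchanged. -/
noncomputable def revJoint (S : FeedbackFamily Y X n) (R : ForwardFamily Y X n) :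
    Measure ((∀ j : Fin (n + 1), X j) × (∀ j : Fin (n + 1), Y j)) :=
  (joint S R).map Prod.swap

/-- `∫ log(dσ/dπ) dμ`, as an extended real number (integral of the positive part minus
integral of the negative part). -/
noncomputable def elogInt {Z : Type*} [MeasurableSpace Z] (σ π μ : Measure Z) : EReal :=
  ((∫⁻ z, ENNReal.ofReal (llr σ π z) ∂μ : ℝ≥0∞) : EReal) -
    ((∫⁻ z, ENNReal.ofReal (-llr σ π z) ∂μ : ℝ≥0∞) : EReal)

/-- `∫ |log(dμ/dν)| dμ`. -/
noncomputable def absKL {Z : Type*} [MeasurableSpace Z] (μ ν : Measure Z) : ℝ≥0∞ :=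
  ∫⁻ z, ENNReal.ofReal |llr μ ν z| ∂μ

section Topology

variable [∀ i, TopologicalSpace (X i)] [∀ i, TopologicalSpace (Y i)]

/-- Condition (CA): each `p_i` is weakly (Feller) continuous in the conditioning
variables `(x^{i-1}, y^{i-1})`. -/
def CondCA (P : FeedbackFamily X Y n) : Prop :=
  ∀ (i : Fin (n + 1)) (g : BoundedContinuousFunction (X i) ℝ),
    Continuous (fun t : (∀ j : Fin (i : ℕ), X j) × (∀ j : Fin (i : ℕ), Y j) =>
      ∫ x, g x ∂(P.p i t))

/-- Condition (CB): each `q_i` is weakly (Feller) continuous in the conditioning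
variables `(x^i, y^{i-1})`. -/
def CondCB (Q : ForwardFamily X Y n) : Prop :=
  ∀ (i : Fin (n + 1)) (g : BoundedContinuousFunction (Y i) ℝ),
    Continuous (fun t : (∀ j : Fin ((i : ℕ) + 1), X j) × (∀ j : Fin (i : ℕ), Y j) =>
      ∫ y, g y ∂(Q.q i (t.2, t.1)))

end Topology

/-! Since `←P⊗λ` is the swap of `λ ⊗ ←P_{0,n}`, both divergences compare the law `π` of `(y, x)`
under `←P⊗→Q` with measures `λ ⊗ κ` and `ν ⊗ κ` sharing the kernel `κ = ←P_{0,n}`. Disintegrating `π`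
along its first marginal `ν`, the chain rule for the Kullback–Leibler divergence splits
`D(π ‖ λ ⊗ κ)` into `D(π ‖ ν ⊗ κ) + D(ν ‖ λ)`, and the first term is the directed information. -/

open InformationTheory

section KLDiv

variable {α β : Type*} [MeasurableSpace α] [MeasurableSpace β]

lemma KL_eq_klDiv {μ ν : Measure α} [IsFiniteMeasure μ] [IsFiniteMeasure ν]
    (h : μ Set.univ = ν Set.univ) : KL μ ν = klDiv μ ν := by
  unfold KL
  split_ifs with hμν
  · rw [klDiv_of_ac_of_integrable hμν.1 hμν.2, measureReal_def, measureReal_def, h,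
      add_sub_cancel_right]
  · exact (klDiv_eq_top_iff.mpr fun hac hint => hμν ⟨hac, hint⟩).symm

lemma klDiv_map_measurableEquiv (e : α ≃ᵐ β) (μ ν : Measure α) [IsFiniteMeasure μ]
    [IsFiniteMeasure ν] : klDiv (μ.map e) (ν.map e) = klDiv μ ν := by
  refine le_antisymm (klDiv_map_le μ ν e.measurable) ?_
  simpa only [e.map_symm_map] using klDiv_map_le (μ.map e) (ν.map e) e.symm.measurable

lemma klDiv_compProd_right_eq_add [StandardBorelSpace β] [Nonempty β] (ρ : Measure (α × β))
    [IsFiniteMeasure ρ] (ν : Measure α) [IsFiniteMeasure ν] (κ : Kernel α β) [IsMarkovKernel κ] :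
    klDiv ρ (ν ⊗ₘ κ) = klDiv ρ (ρ.fst ⊗ₘ κ) + klDiv ρ.fst ν := by
  have h := klDiv_compProd_eq_add ρ.fst ν ρ.condKernel κ
  rwa [ρ.disintegrate ρ.condKernel, add_comm] at h

end KLDiv

@[fun_prop]
theorem _root_.Measurable.finSnoc {Z : ℕ → Type*} [∀ i, MeasurableSpace (Z i)] {k : ℕ}
    {α : Type*} [MeasurableSpace α] {f : α → ∀ j : Fin k, Z j} {g : α → Z k}
    (hf : Measurable f) (hg : Measurable g) :
    Measurable fun a => (Fin.snoc (f a) (g a) : ∀ j : Fin (k + 1), Z j) :=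
  (measurable_finSnoc k).comp (hf.prodMk hg)

section Families

variable {X Y : ℕ → Type*} [∀ i, MeasurableSpace (X i)] [∀ i, MeasurableSpace (Y i)] {n : ℕ}

instance isMarkovKernel_back (P : FeedbackFamily X Y n) :
    ∀ k (h : k ≤ n), IsMarkovKernel (back P k h)
  | 0, _ => by
    have := P.markov ⟨0, Nat.succ_pos n⟩
    rw [back]
    exact Kernel.IsMarkovKernel.map _ (by fun_prop)
  | k + 1, _ => by
    have := isMarkovKernel_back P k (by omega)
    have := P.markov ⟨k + 1, by omega⟩
    rw [back]
    exact Kernel.IsMarkovKernel.map _ (by fun_prop)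

instance isProbabilityMeasure_jointAux (P : FeedbackFamily X Y n) (Q : ForwardFamily X Y n) :
    ∀ k (h : k ≤ n + 1), IsProbabilityMeasure (jointAux P Q k h)
  | 0, _ => by rw [jointAux]; infer_instance
  | k + 1, _ => by
    have := isProbabilityMeasure_jointAux P Q k (by omega)
    have := P.markov ⟨k, by omega⟩
    have := Q.markov ⟨k, by omega⟩
    have hx : Measurable fun t : ((∀ j : Fin k, X j) × (∀ j : Fin k, Y j)) × X k =>
        (t.1.2, (Fin.snoc t.1.1 t.2 : ∀ j : Fin (k + 1), X j)) := by fun_prop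
    have := Measure.isProbabilityMeasure_map
      (μ := jointAux P Q k (by omega) ⊗ₘ P.p ⟨k, by omega⟩) hx.aemeasurable
    rw [jointAux]
    exact Measure.isProbabilityMeasure_map (by fun_prop)

instance isProbabilityMeasure_joint (P : FeedbackFamily X Y n) (Q : ForwardFamily X Y n) :
    IsProbabilityMeasure (joint P Q) :=
  isProbabilityMeasure_jointAux P Q (n + 1) le_rfl

lemma nu_eq_fst_map_swap (P : FeedbackFamily X Y n) (Q : ForwardFamily X Y n) :
    nu P Q = ((joint P Q).map Prod.swap).fst :=
  Measure.fst_map_swap.symm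

lemma KL_joint_backProd_eq_klDiv_map_swap (P : FeedbackFamily X Y n) (Q : ForwardFamily X Y n)
    (σ : Measure (∀ j : Fin (n + 1), Y j)) [IsProbabilityMeasure σ] :
    KL (joint P Q) (backProd P σ) = klDiv ((joint P Q).map Prod.swap)
      (σ ⊗ₘ (back P n le_rfl).comap (restr n) (measurable_restr n)) := by
  have : IsProbabilityMeasure (backProd P σ) :=
    Measure.isProbabilityMeasure_map measurable_swap.aemeasurable
  calc KL (joint P Q) (backProd P σ)
      = klDiv (((joint P Q).map Prod.swap).map Prod.swap) (backProd P σ) := by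
        rw [KL_eq_klDiv (by simp only [measure_univ]),
          Measure.map_map measurable_swap measurable_swap, Prod.swap_swap_eq, Measure.map_id]
    _ = _ := klDiv_map_measurableEquiv MeasurableEquiv.prodComm _ _

end Families

section Statements

variable {X Y : ℕ → Type*} {n : ℕ}
  [∀ i, TopologicalSpace (X i)] [∀ i, MeasurableSpace (X i)] [∀ i, BorelSpace (X i)]
  [∀ i, PolishSpace (X i)]
  [∀ i, TopologicalSpace (Y i)] [∀ i, MeasurableSpace (Y i)] [∀ i, BorelSpace (Y i)]
  [∀ i, PolishSpace (Y i)]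

/-- For every probability measure `λ` on `Y_{0,n}`,
`D(←P⊗→Q ‖ ←P⊗λ) = I(←P,→Q) + D(ν_{0,n} ‖ λ)` in `[0, ∞]`. -/
theorem kl_backProd_eq_directedInfo_add_kl_marginal
    (P : FeedbackFamily X Y n) (Q : ForwardFamily X Y n)
    (lam : Measure (∀ j : Fin (n + 1), Y j)) (hlam : IsProbabilityMeasure lam) :
    KL (joint P Q) (backProd P lam) = DI P Q + KL (nu P Q) lam := by
  have : Nonempty (∀ j : Fin (n + 1), X j) :=
    (nonempty_of_isProbabilityMeasure (joint P Q)).map Prod.fst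
  have : IsProbabilityMeasure ((joint P Q).map Prod.swap) :=
    Measure.isProbabilityMeasure_map measurable_swap.aemeasurable
  rw [DI, nu_eq_fst_map_swap, KL_joint_backProd_eq_klDiv_map_swap,
    KL_joint_backProd_eq_klDiv_map_swap, klDiv_compProd_right_eq_add,
    KL_eq_klDiv (by simp only [measure_univ])]

end Statements

end PaperDI
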